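/- arXiv:1401.5259 — 7 statements merged into one kernel-verified Lean document; each statement's English description precedes it below -/
import Mathlib

section
/- Let a ∈ ℤ^d and r ∈ ℝ^d. If r·a ∈ ℤ, then the set of s ∈ ℝ^d with τ_s(a) = τ_r(a) and τ_s^*(a) = τ_r^*(a) equals the hyperplane {s : s·a = r·a}. If r·a ∉ ℤ, this set equals the open strip {s : ⌊r·a⌋ < s·a < ⌊r·a⌋ + 1}. -/
open scoped BigOperators

/-- Inner product of a real parameter vector with an integer vector. -/
noncomputable def dotp {d : ℕ} (r : Fin d → ℝ) (a : Fin d → ℤ) : ℝ := ∑ j, r j * (a j : ℝ)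

/-- The shift radix system map τ_r. -/
noncomputable def tau {d : ℕ} (r : Fin d → ℝ) (a : Fin d → ℤ) : Fin d → ℤ :=
  fun i => if h : (i : ℕ) + 1 < d then a ⟨(i : ℕ) + 1, h⟩ else -⌊dotp r a⌋

/-- τ_r^* := -τ_r ∘ (-id). -/
noncomputable def tauStar {d : ℕ} (r : Fin d → ℝ) (a : Fin d → ℤ) : Fin d → ℤ :=
  -(tau r (-a))

/-- D_d^{(0)}: parameters with the finiteness property. -/
def D0 (d : ℕ) : Set (Fin d → ℝ) :=
  {r | ∀ a : Fin d → ℤ, ∃ n : ℕ, (tau r)^[n] a = 0}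

/-- D_d: parameters with all orbits eventually periodic. -/
def Dset (d : ℕ) : Set (Fin d → ℝ) :=
  {r | ∀ a : Fin d → ℤ, ∃ m n : ℕ, m ≠ n ∧ (tau r)^[m] a = (tau r)^[n] a}

/-- The iteration producing the set of witnesses. -/
def Vseq {d : ℕ} (r : Fin d → ℝ) : ℕ → Set (Fin d → ℤ)
  | 0 => {v | ∃ j : Fin d, v = Pi.single j 1 ∨ v = -Pi.single j 1}
  | n + 1 => Vseq r n ∪ (tau r '' Vseq r n) ∪ (tauStar r '' Vseq r n)

/-- The set of witnesses associated with r. -/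
def Vr {d : ℕ} (r : Fin d → ℝ) : Set (Fin d → ℤ) := ⋃ n, Vseq r n

/-- The polyhedron P_r of parameters acting like r on the witnesses of r. -/
def Pr {d : ℕ} (r : Fin d → ℝ) : Set (Fin d → ℝ) :=
  {s | ∀ a ∈ Vr r, tau s a = tau r a ∧ tauStar s a = tauStar r a}


lemma dotp_neg {d : ℕ} (s : Fin d → ℝ) (a : Fin d → ℤ) : dotp s (-a) = -dotp s a := by
  unfold dotp
  rw [← Finset.sum_neg_distrib]
  apply Finset.sum_congr rfl
  intro j _
  rw [Pi.neg_apply]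
  push_cast
  ring

lemma tau_eq_iff {d : ℕ} (hd : 0 < d) (s r : Fin d → ℝ) (a : Fin d → ℤ) :
    tau s a = tau r a ↔ ⌊dotp s a⌋ = ⌊dotp r a⌋ := by
  constructor
  · intro h
    have h2 := congrFun h ⟨d - 1, by omega⟩
    simp only [tau] at h2
    rw [dif_neg (by omega), dif_neg (by omega)] at h2
    omega
  · intro h
    funext i
    simp only [tau]
    split <;> simp [h]

theorem stmt2 {d : ℕ} (a : Fin d → ℤ) (r : Fin d → ℝ) :
    ((∃ z : ℤ, dotp r a = (z : ℝ)) →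
      {s : Fin d → ℝ | tau s a = tau r a ∧ tauStar s a = tauStar r a} =
        {s : Fin d → ℝ | dotp s a = dotp r a}) ∧
    ((¬ ∃ z : ℤ, dotp r a = (z : ℝ)) →
      {s : Fin d → ℝ | tau s a = tau r a ∧ tauStar s a = tauStar r a} =
        {s : Fin d → ℝ |
          (⌊dotp r a⌋ : ℝ) < dotp s a ∧ dotp s a < (⌊dotp r a⌋ : ℝ) + 1}) := by
  have key : ∀ (hd : 0 < d) (s : Fin d → ℝ),
      (tau s a = tau r a ∧ tauStar s a = tauStar r a) ↔
      (⌊dotp s a⌋ = ⌊dotp r a⌋ ∧ ⌊-dotp s a⌋ = ⌊-dotp r a⌋) := by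
    intro hd s
    have hstar : tauStar s a = tauStar r a ↔ tau s (-a) = tau r (-a) := by
      unfold tauStar; exact neg_inj
    rw [tau_eq_iff hd, hstar, tau_eq_iff hd, dotp_neg, dotp_neg]
  rcases Nat.eq_zero_or_pos d with hd | hd
  · subst hd
    constructor
    · intro _
      ext s
      have h0 : tau s a = tau r a := funext fun i => i.elim0
      have h1 : tauStar s a = tauStar r a := funext fun i => i.elim0
      simp [Set.mem_setOf_eq, h0, h1, dotp]
    · intro h
      exact absurd ⟨0, by simp [dotp]⟩ h
  · constructor
    · rintro ⟨z, hz⟩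
      ext s
      simp only [Set.mem_setOf_eq, key hd s, hz]
      have e1 : ⌊(z : ℝ)⌋ = z := Int.floor_intCast z
      have e2 : ⌊-(z : ℝ)⌋ = -z := by
        rw [show -(z : ℝ) = ((-z : ℤ) : ℝ) by push_cast; ring]
        exact Int.floor_intCast _
      rw [e1, e2]
      constructor
      · rintro ⟨h1, h2⟩
        have f1 := Int.floor_le (dotp s a)
        have f3 := Int.floor_le (-dotp s a)
        rw [h1] at f1
        rw [h2] at f3
        push_cast at f3
        linarith
      · intro h
        rw [h]
        constructor
        · exact Int.floor_intCast z
        · rw [show -(z : ℝ) = ((-z : ℤ) : ℝ) by push_cast; ring]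
          exact Int.floor_intCast _
    · intro h
      set y := dotp r a with hy
      have hlt : (⌊y⌋ : ℝ) < y :=
        lt_of_le_of_ne (Int.floor_le y) (fun h' => h ⟨⌊y⌋, h'.symm⟩)
      have hub := Int.lt_floor_add_one y
      have hneg : ⌊-y⌋ = -⌊y⌋ - 1 := by
        rw [Int.floor_eq_iff]
        constructor
        · push_cast; linarith
        · push_cast; linarith
      ext s
      simp only [Set.mem_setOf_eq, key hd s, hneg]
      set x := dotp s a with hx
      constructor
      · rintro ⟨h1, h2⟩
        have f2 := Int.lt_floor_add_one x
        have f4 := Int.lt_floor_add_one (-x)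
        rw [h1] at f2
        rw [h2] at f4
        push_cast at f4
        constructor <;> linarith
      · rintro ⟨g1, g2⟩
        constructor
        · rw [Int.floor_eq_iff]
          exact ⟨by push_cast; linarith, by push_cast; linarith⟩
        · rw [Int.floor_eq_iff]
          exact ⟨by push_cast; linarith, by push_cast; linarith⟩
end

section
/- For r in the interior of D_d, the polyhedron P_r is contained in the translated unit cube ⌊r⌋ + [0,1]^d. -/
open scoped BigOperators

theorem stmt6 {d : ℕ} (r : Fin d → ℝ) (hr : r ∈ interior (Dset d)) :
    ∀ s ∈ Pr r, ∀ i : Fin d, (⌊r i⌋ : ℝ) ≤ s i ∧ s i ≤ (⌊r i⌋ : ℝ) + 1 := by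
  intro s hs i
  have hd : 0 < d := i.pos
  set a : Fin d → ℤ := Pi.single i 1 with ha
  have haV : a ∈ Vr r := Set.mem_iUnion.2 ⟨0, ⟨i, Or.inl rfl⟩⟩
  have htau : tau s a = tau r a := (hs a haV).1
  have hdot : ∀ t : Fin d → ℝ, dotp t a = t i := by
    intro t
    simp [dotp, ha, Pi.single_apply, mul_ite]
  have hk : ¬ ((d - 1) + 1 < d) := by omega
  have := congrFun htau ⟨d - 1, by omega⟩
  simp only [tau, hk, dif_neg, not_false_iff, hdot, neg_inj] at this
  have hfl : ⌊s i⌋ = ⌊r i⌋ := this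
  constructor
  · calc (⌊r i⌋ : ℝ) = (⌊s i⌋ : ℝ) := by rw [hfl]
      _ ≤ s i := Int.floor_le _
  · have := Int.lt_floor_add_one (s i)
    rw [hfl] at this
    exact_mod_cast this.le
end

section
/- For every n ∈ ℕ with n ≥ 1, the parameter r = (1, -1/n) ∈ ℝ² is not in D_2^{(0)}: the orbit of a := (1, -n) under τ_r is periodic and nontrivial. Specifically, τ_r cycles through the points listed in the cycle C_6(n). -/
/-- The two-dimensional shift radix system map. -/
noncomputable def tau2 (r : ℝ × ℝ) (a : ℤ × ℤ) : ℤ × ℤ :=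
  (a.2, -⌊r.1 * (a.1 : ℝ) + r.2 * (a.2 : ℝ)⌋)

/-- D_2^{(0)}: two-dimensional parameters with the finiteness property. -/
def D0two : Set (ℝ × ℝ) :=
  {r | ∀ a : ℤ × ℤ, ∃ n : ℕ, (tau2 r)^[n] a = (0, 0)}

/-- Integer model of `tau2 (1, -1/n)`. -/
def gmap (N : ℤ) (p : ℤ × ℤ) : ℤ × ℤ := (p.2, -((p.1 * N - p.2) / N))

lemma real_floor_div (m : ℤ) (d : ℕ) : ⌊((m : ℝ) / (d : ℝ))⌋ = m / (d : ℤ) := by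
  rw [← Rat.floor_intCast_div_natCast m d, ← Rat.floor_cast (α := ℝ), Rat.cast_div,
    Rat.cast_intCast, Rat.cast_natCast]

lemma tau_eq_gmap (n : ℕ) (hn : 1 ≤ n) :
    tau2 (1, -1 / (n : ℝ)) = gmap (n : ℤ) := by
  funext a
  obtain ⟨x, y⟩ := a
  have hn0 : (n : ℝ) ≠ 0 := by positivity
  unfold tau2 gmap
  have h : (1 : ℝ) * (x : ℝ) + (-1 / (n : ℝ)) * (y : ℝ)
      = ((x * (n : ℤ) - y : ℤ) : ℝ) / (n : ℝ) := by
    push_cast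
    field_simp
    ring
  rw [h, real_floor_div]

lemma divq (q s N : ℤ) (h1 : 0 ≤ s) (h2 : s < N) : (s + q * N) / N = q := by
  rw [Int.add_mul_ediv_right _ _ (by omega : N ≠ 0), Int.ediv_eq_zero_of_lt h1 h2, zero_add]

lemma gstep (N : ℤ) (x y q s t : ℤ) (h1 : 0 ≤ s) (h2 : s < N) (h3 : x * N - y = s + q * N)
    (h4 : -q = t) : gmap N (x, y) = (y, t) := by
  unfold gmap
  rw [h3, divq q s N h1 h2, h4]

lemma four_step (N j : ℤ) (h1 : 1 ≤ j) (h2 : j ≤ N - 3) :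
    (gmap N)^[4] (j + 2, -(N - j)) = (j + 3, -(N - j - 1)) := by
  have s1 : gmap N (j + 2, -(N - j)) = (-(N - j), -(j + 2)) :=
    gstep N _ _ (j + 2) (N - j) _ (by omega) (by omega) (by ring) (by ring)
  have s2 : gmap N (-(N - j), -(j + 2)) = (-(j + 2), N - j) :=
    gstep N _ _ (-(N - j)) (j + 2) _ (by omega) (by omega) (by ring) (by ring)
  have s3 : gmap N (-(j + 2), N - j) = (N - j, j + 3) :=
    gstep N _ _ (-(j + 3)) j _ (by omega) (by omega) (by ring) (by ring)
  have s4 : gmap N (N - j, j + 3) = (j + 3, -(N - j - 1)) :=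
    gstep N _ _ (N - j - 1) (N - j - 3) _ (by omega) (by omega) (by ring) (by ring)
  show gmap N (gmap N (gmap N (gmap N (j + 2, -(N - j))))) = _
  rw [s1, s2, s3, s4]

lemma head_step (N : ℤ) (h3 : 3 ≤ N) :
    (gmap N)^[4] (1, -N) = (3, -(N - 1)) := by
  have s1 : gmap N (1, -N) = (-N, -2) :=
    gstep N _ _ 2 0 _ (by omega) (by omega) (by ring) (by ring)
  have s2 : gmap N (-N, -2) = (-2, N) :=
    gstep N _ _ (-N) 2 _ (by omega) (by omega) (by ring) (by ring)
  have s3 : gmap N (-2, N) = (N, 3) :=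
    gstep N _ _ (-3) 0 _ (by omega) (by omega) (by ring) (by ring)
  have s4 : gmap N (N, 3) = (3, -(N - 1)) :=
    gstep N _ _ (N - 1) (N - 3) _ (by omega) (by omega) (by ring) (by ring)
  show gmap N (gmap N (gmap N (gmap N (1, -N)))) = _
  rw [s1, s2, s3, s4]

lemma tail_step (N : ℤ) (h3 : 3 ≤ N) :
    (gmap N)^[5] (N, -2) = (1, -N) := by
  have s1 : gmap N (N, -2) = (-2, -N) :=
    gstep N _ _ N 2 _ (by omega) (by omega) (by ring) (by ring)
  have s2 : gmap N (-2, -N) = (-N, 1) :=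
    gstep N _ _ (-1) 0 _ (by omega) (by omega) (by ring) (by ring)
  have s3 : gmap N (-N, 1) = (1, N + 1) :=
    gstep N _ _ (-(N + 1)) (N - 1) _ (by omega) (by omega) (by ring) (by ring)
  have s4 : gmap N (1, N + 1) = (N + 1, 1) :=
    gstep N _ _ (-1) (N - 1) _ (by omega) (by omega) (by ring) (by ring)
  have s5 : gmap N (N + 1, 1) = (1, -N) :=
    gstep N _ _ N (N - 1) _ (by omega) (by omega) (by ring) (by ring)
  show gmap N (gmap N (gmap N (gmap N (gmap N (N, -2))))) = _
  rw [s1, s2, s3, s4, s5]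

lemma descent (N : ℤ) (h3 : 3 ≤ N) :
    ∀ k : ℕ, (k : ℤ) ≤ N - 3 →
      (gmap N)^[4 * (k + 1)] (1, -N) = ((k : ℤ) + 3, -(N - 1 - k)) := by
  intro k
  induction k with
  | zero =>
    intro _
    simpa using head_step N h3
  | succ k ih =>
    intro hk
    push_cast at hk ⊢
    have hk' : (k : ℤ) ≤ N - 3 := by omega
    have : 4 * (k + 1 + 1) = 4 + 4 * (k + 1) := by ring
    rw [this, Function.iterate_add_apply, ih hk']
    have := four_step N ((k : ℤ) + 1) (by omega) (by omega)
    convert this using 2 <;> ring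

lemma gmap_period (N : ℤ) (h3 : 3 ≤ N) (n : ℕ) (hN : (n : ℤ) = N) :
    (gmap N)^[4 * n - 3] (1, -N) = (1, -N) := by
  have hn3 : 3 ≤ n := by omega
  have key := descent N h3 (n - 3) (by omega)
  have hstate : (gmap N)^[4 * (n - 2)] (1, -N) = (N, -2) := by
    have h1 : n - 3 + 1 = n - 2 := by omega
    rw [h1] at key
    have hc : ((n - 3 : ℕ) : ℤ) = N - 3 := by omega
    rw [key, hc]
    norm_num
  have hsplit : 4 * n - 3 = 5 + 4 * (n - 2) := by omega
  rw [hsplit, Function.iterate_add_apply, hstate, tail_step N h3]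

theorem stmt14 (n : ℕ) (hn : 1 ≤ n) :
    let r : ℝ × ℝ := (1, -1 / (n : ℝ))
    let a : ℤ × ℤ := (1, -(n : ℤ))
    (∃ p : ℕ, 0 < p ∧ (tau2 r)^[p] a = a) ∧ a ≠ (0, 0) ∧ r ∉ D0two := by
  intro r a
  have htau : tau2 r = gmap (n : ℤ) := tau_eq_gmap n hn
  have hper : ∃ p : ℕ, 0 < p ∧ (tau2 r)^[p] a = a := by
    rw [htau]
    show ∃ p : ℕ, 0 < p ∧ (gmap (n : ℤ))^[p] (1, -(n : ℤ)) = (1, -(n : ℤ))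
    rcases Nat.lt_or_ge n 3 with h | h
    · interval_cases n
      · exact ⟨6, by norm_num, by decide⟩
      · exact ⟨5, by norm_num, by decide⟩
    · exact ⟨4 * n - 3, by omega, gmap_period (n : ℤ) (by exact_mod_cast h) n rfl⟩
  have hne : a ≠ (0, 0) := by
    simp only [a, ne_eq, Prod.mk.injEq]
    intro h
    exact one_ne_zero h.1
  refine ⟨hper, hne, ?_⟩
  intro hmem
  obtain ⟨m, hm⟩ := hmem a
  obtain ⟨p, hp, hperiod⟩ := hper
  have hfix : tau2 r (0, 0) = (0, 0) := by
    unfold tau2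
    norm_num
  have hmult : (tau2 r)^[m * p] a = a := by
    rw [mul_comm, Function.iterate_mul]
    exact Function.iterate_fixed hperiod m
  have hzero : (tau2 r)^[m * p] a = (0, 0) := by
    have hle : m ≤ m * p := Nat.le_mul_of_pos_right m hp
    have : m * p = (m * p - m) + m := by omega
    rw [this, Function.iterate_add_apply, hm]
    exact Function.iterate_fixed hfix _
  rw [hmult] at hzero
  exact hne hzero
end

section
/- The parameter (1/2, 1/2) belongs to D_2^{(0)}: every orbit of τ_{(1/2,1/2)} on ℤ² eventually reaches (0,0). -/
/-- Integer version of the map at parameter (1/2,1/2). -/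
def T (a : ℤ × ℤ) : ℤ × ℤ := (a.2, -((a.1 + a.2) / 2))

lemma floor_half (m : ℤ) : ⌊((m : ℝ)) / 2⌋ = m / 2 := by
  have h : ((m : ℝ)) / 2 = (((m : ℚ) / ((2:ℕ) : ℚ) : ℚ) : ℝ) := by push_cast; ring
  rw [h, Rat.floor_cast, Rat.floor_intCast_div_natCast m 2]
  norm_cast

lemma tau2_eq_T (a : ℤ × ℤ) : tau2 ((1/2 : ℝ), (1/2 : ℝ)) a = T a := by
  unfold tau2 T
  have : (1/2 : ℝ) * (a.1:ℝ) + (1/2 : ℝ) * (a.2:ℝ) = ((a.1 + a.2 : ℤ) : ℝ) / 2 := by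
    push_cast; ring
  rw [this, floor_half]

/-- The Lyapunov function value. -/
def f (a : ℤ × ℤ) : ℤ := 3*a.1^2 + 2*a.1*a.2 + 4*a.2^2

lemma key (a b : ℤ) (h0 : ¬(a = 0 ∧ b = 0)) (h1 : ¬(a = -1 ∧ b = 0))
    (h2 : ¬(a = 0 ∧ b = -1)) :
    3*b^2 + 2*b*(-((a+b)/2)) + 4*(-((a+b)/2))^2 < 3*a^2 + 2*a*b + 4*b^2 := by
  obtain ⟨q, hq⟩ : ∃ q, (a+b)/2 = q := ⟨_, rfl⟩
  rw [hq]
  have hqq : a + b = 2 * ((a+b)/2) + (a+b) % 2 := (Int.mul_ediv_add_emod _ _).symm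
  have hr : a = 2*q - b ∨ a = 2*q + 1 - b := by omega
  rcases hr with ha | ha
  · subst ha
    have hnz : ¬(q = 0 ∧ b = 0) := by rintro ⟨rfl, rfl⟩; exact h0 ⟨by ring, rfl⟩
    rcases eq_or_ne q 0 with rfl | hq0
    · have hb : b ≠ 0 := fun hb => hnz ⟨rfl, hb⟩
      have : 0 < b^2 := by positivity
      nlinarith
    · have h7 : 1 ≤ q^2 := by
        rcases hq0.lt_or_gt with h | h <;> nlinarith
      nlinarith [sq_nonneg (2*b - 3*q)]
  · subst ha
    have hh1 : ¬(q = -1 ∧ b = 0) := by rintro ⟨rfl, rfl⟩; exact h1 ⟨by ring, rfl⟩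
    have hh2 : ¬(q = -1 ∧ b = -1) := by rintro ⟨rfl, rfl⟩; exact h2 ⟨by ring, rfl⟩
    rcases eq_or_ne q (-1) with rfl | hq1
    · have hb : b ≥ 1 ∨ b ≤ -2 := by
        rcases lt_trichotomy b 0 with h | h | h
        · rcases eq_or_lt_of_le (by omega : b ≤ -1) with h' | h'
          · exact absurd ⟨rfl, h'⟩ hh2
          · right; omega
        · exact absurd ⟨rfl, h⟩ hh1
        · left; omega
      rcases hb with hb | hb <;> nlinarith
    · have hq : q ≥ 0 ∨ q ≤ -2 := by omega
      rcases hq with hq | hq <;>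
        nlinarith [sq_nonneg (4*b - 6*q - 4), sq_nonneg (q+2), sq_nonneg q]

lemma reach (a : ℤ × ℤ) : ∃ n : ℕ, T^[n] a = (0, 0) := by
  generalize hN : (f a).toNat = N
  induction N using Nat.strong_induction_on generalizing a with
  | _ N ih =>
    by_cases h0 : a = (0, 0)
    · exact ⟨0, by simp [h0]⟩
    by_cases h1 : a = (-1, 0)
    · exact ⟨3, by subst h1; rfl⟩
    by_cases h2 : a = (0, -1)
    · exact ⟨3, by subst h2; rfl⟩
    · have hlt : f (T a) < f a := by
        have := key a.1 a.2
          (by rintro ⟨x, y⟩; exact h0 (Prod.ext x y))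
          (by rintro ⟨x, y⟩; exact h1 (Prod.ext x y))
          (by rintro ⟨x, y⟩; exact h2 (Prod.ext x y))
        simpa [T, f] using this
      have hpos : 0 ≤ f (T a) := by
        have : ∀ x y : ℤ, 0 ≤ 3*x^2 + 2*x*y + 4*y^2 := by
          intro x y; nlinarith [sq_nonneg (x+y), sq_nonneg x, sq_nonneg y]
        exact this _ _
      obtain ⟨n, hn⟩ := ih (f (T a)).toNat (by omega) (T a) rfl
      exact ⟨n + 1, by rw [Function.iterate_succ_apply, hn]⟩

theorem stmt15 : ((1 / 2 : ℝ), (1 / 2 : ℝ)) ∈ D0two := by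
  intro a
  obtain ⟨n, hn⟩ := reach a
  refine ⟨n, ?_⟩
  have : tau2 ((1/2 : ℝ), (1/2 : ℝ)) = T := funext tau2_eq_T
  rw [this]
  exact hn
end

section
/- Let r ∈ ℝ^d, ρ̃ ∈ (0,1), and suppose ‖·‖ is a norm on ℝ^d with ‖R_r x‖ ≤ ρ̃‖x‖ for all x ∈ ℝ^d. Set C := max{‖(0,...,0,v)‖ : v ∈ [0,1]}/(1 - ρ̃). Then for every a ∈ ℤ^d with ‖a‖ > C one has ‖τ_r(a)‖ < ‖a‖, and the set {a ∈ ℤ^d : there exists b ∈ ℤ^d with ‖b‖ ≤ C and n ∈ ℕ such that a appears in the τ_r-orbit of b} is contained in the ball of radius C around 0. -/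
open scoped BigOperators

/-- The transposed companion matrix of X^d + r_d X^{d-1} + ⋯ + r_2 X + r_1. -/
noncomputable def Rmat {d : ℕ} (r : Fin d → ℝ) : Matrix (Fin d) (Fin d) ℝ :=
  fun i j => if (i : ℕ) + 1 < d then (if (j : ℕ) = (i : ℕ) + 1 then 1 else 0)
    else -(r j)

lemma tau_eq_mulVec_add {d : ℕ} (r : Fin d → ℝ) (a : Fin d → ℤ) :
    (fun i => ((tau r a i : ℤ) : ℝ)) =
      (Rmat r).mulVec (fun i => (a i : ℝ)) +
        (Int.fract (dotp r a)) • (fun i : Fin d => if (i : ℕ) + 1 < d then (0:ℝ) else 1) := by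
  funext i
  simp only [tau, Rmat, Matrix.mulVec, dotProduct, Pi.add_apply, Pi.smul_apply,
    smul_eq_mul]
  split_ifs with h
  · rw [Finset.sum_eq_single (⟨(i : ℕ) + 1, h⟩ : Fin d)]
    · simp
    · intro j _ hj
      have : (j : ℕ) ≠ (i : ℕ) + 1 := fun hc => hj (Fin.ext hc)
      simp [this]
    · simp
  · push_cast
    rw [Int.fract, dotp]
    rw [show (∑ j, -r j * (a j : ℝ)) = -∑ j, r j * (a j : ℝ) by
      rw [← Finset.sum_neg_distrib]; congr 1; funext j; ring]
    ring

theorem stmt17 {d : ℕ} (r : Fin d → ℝ) (ρ : ℝ) (hρ : ρ ∈ Set.Ioo (0 : ℝ) 1)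
    (N : (Fin d → ℝ) → ℝ)
    (hN0 : ∀ x, 0 ≤ N x)
    (hNadd : ∀ x y, N (x + y) ≤ N x + N y)
    (hNsmul : ∀ (c : ℝ) (x), N (c • x) = |c| * N x)
    (hR : ∀ x, N ((Rmat r).mulVec x) ≤ ρ * N x) :
    let C : ℝ :=
      sSup ((fun t : ℝ =>
        N (fun i => if (i : ℕ) + 1 < d then 0 else t)) '' Set.Icc 0 1) / (1 - ρ)
    (∀ a : Fin d → ℤ, C < N (fun i => (a i : ℝ)) →
      N (fun i => (tau r a i : ℝ)) < N (fun i => (a i : ℝ))) ∧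
    {a : Fin d → ℤ | ∃ b : Fin d → ℤ, N (fun i => (b i : ℝ)) ≤ C ∧
        ∃ m : ℕ, (tau r)^[m] b = a} ⊆
      {a : Fin d → ℤ | N (fun i => (a i : ℝ)) ≤ C} := by
  intro C
  obtain ⟨hρ0, hρ1⟩ := hρ
  set e : Fin d → ℝ := fun i => if (i : ℕ) + 1 < d then (0:ℝ) else 1 with he
  have hvec : ∀ t : ℝ, (fun i : Fin d => if (i : ℕ) + 1 < d then (0:ℝ) else t) = t • e := by
    intro t; funext i; simp only [he, Pi.smul_apply, smul_eq_mul]; split_ifs <;> simp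
  have hsup : sSup ((fun t : ℝ =>
      N (fun i => if (i : ℕ) + 1 < d then 0 else t)) '' Set.Icc 0 1) = N e := by
    apply le_antisymm
    · apply csSup_le
      · exact ⟨_, ⟨1, Set.right_mem_Icc.mpr zero_le_one, rfl⟩⟩
      · rintro x ⟨t, ⟨ht0, ht1⟩, rfl⟩
        beta_reduce
        rw [hvec t, hNsmul, abs_of_nonneg ht0]
        nlinarith [hN0 e]
    · apply le_csSup
      · refine ⟨N e, ?_⟩
        rintro x ⟨t, ⟨ht0, ht1⟩, rfl⟩
        beta_reduce
        rw [hvec t, hNsmul, abs_of_nonneg ht0]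
        nlinarith [hN0 e]
      · refine ⟨1, Set.right_mem_Icc.mpr zero_le_one, ?_⟩
        beta_reduce
        rw [hvec 1, one_smul]
  have hC : C = N e / (1 - ρ) := by unfold C; rw [hsup]
  have h1ρ : 0 < 1 - ρ := by linarith
  -- main step
  have step : ∀ a : Fin d → ℤ,
      N (fun i => (tau r a i : ℝ)) ≤ ρ * N (fun i => (a i : ℝ)) + N e := by
    intro a
    rw [tau_eq_mulVec_add r a]
    calc N _ ≤ N ((Rmat r).mulVec (fun i => (a i : ℝ))) + N ((Int.fract (dotp r a)) • e) :=
          hNadd _ _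
      _ ≤ ρ * N (fun i => (a i : ℝ)) + N e := by
          refine add_le_add (hR _) ?_
          rw [hNsmul, abs_of_nonneg (Int.fract_nonneg _)]
          nlinarith [hN0 e, Int.fract_nonneg (dotp r a), Int.fract_lt_one (dotp r a)]
  constructor
  · intro a ha
    have := step a
    rw [hC] at ha
    have hNe : N e < (1 - ρ) * N (fun i => (a i : ℝ)) := by
      rw [div_lt_iff₀ h1ρ] at ha; nlinarith
    nlinarith
  · rintro a ⟨b, hb, m, rfl⟩
    induction m with
    | zero => simpa using hb
    | succ m ih =>
      rw [Function.iterate_succ_apply']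
      have := step ((tau r)^[m] b)
      simp only [Set.mem_setOf_eq] at ih ⊢
      have hCe : ρ * C + N e = C := by
        rw [hC]; field_simp; ring
      calc N (fun i => ((tau r ((tau r)^[m] b) i : ℤ) : ℝ)) ≤
            ρ * N (fun i => (((tau r)^[m] b) i : ℝ)) + N e := this
        _ ≤ ρ * C + N e := by nlinarith
        _ = C := hCe
end

section
/- Suppose r lies in the interior of D_d, so that the spectral radius of R_r is strictly less than 1. Then the set of witnesses V_r (the closure of {±e_1,...,±e_d} under τ_r and τ_r^*) is finite. -/
open scoped BigOperators

open Polynomial Finset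

/-- Compatibility: the complex absolute value as a bundled absolute value (the norm). -/
noncomputable def Complex.abs : AbsoluteValue ℂ ℝ where
  toFun z := ‖z‖
  map_mul' := norm_mul
  nonneg' := norm_nonneg
  eq_zero' _ := norm_eq_zero
  add_le' := norm_add_le

theorem Complex.norm_eq_abs (z : ℂ) : ‖z‖ = Complex.abs z := rfl

theorem Complex.abs_ofReal (x : ℝ) : Complex.abs (x : ℂ) = |x| := by
  rw [← Complex.norm_eq_abs, Complex.norm_real, Real.norm_eq_abs]

theorem Complex.abs_natCast (n : ℕ) : Complex.abs (n : ℂ) = n := by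
  rw [← Complex.norm_eq_abs, Complex.norm_natCast]

theorem Complex.abs_intCast (n : ℤ) : Complex.abs (n : ℂ) = |(n : ℝ)| := by
  rw [← Complex.norm_eq_abs, Complex.norm_intCast]

namespace SRS

noncomputable def chi {d : ℕ} (r : Fin d → ℝ) : Polynomial ℂ :=
  X ^ d + ∑ j : Fin d, C (r j : ℂ) * X ^ (j : ℕ)

variable {d : ℕ} (r : Fin d → ℝ)

theorem chi_coeff_lt {k : ℕ} (hk : k < d) : (chi r).coeff k = (r ⟨k, hk⟩ : ℂ) := by
  unfold chi
  rw [coeff_add, coeff_X_pow, if_neg (Nat.ne_of_lt hk), finset_sum_coeff]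
  rw [Finset.sum_eq_single (⟨k, hk⟩ : Fin d)]
  · simp
  · intro j _ hj
    rw [coeff_C_mul, coeff_X_pow, if_neg, mul_zero]
    exact fun h => hj (by ext; simp [h])
  · simp

theorem chi_coeff_d : (chi r).coeff d = 1 := by
  unfold chi
  rw [coeff_add, coeff_X_pow, if_pos rfl, finset_sum_coeff]
  rw [Finset.sum_eq_zero, add_zero]
  intro j _
  rw [coeff_C_mul, coeff_X_pow, if_neg (Nat.ne_of_gt j.2), mul_zero]

theorem chi_natDegree : (chi r).natDegree = d := by
  apply le_antisymm
  · apply Polynomial.natDegree_add_le_of_degree_le (by simpa using natDegree_X_pow_le (R := ℂ) d)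
    apply Polynomial.natDegree_sum_le_of_forall_le
    intro j _
    exact le_trans (natDegree_C_mul_le _ _) (by simpa using j.2.le)
  · exact le_natDegree_of_ne_zero (by rw [chi_coeff_d]; exact one_ne_zero)

theorem chi_monic : (chi r).Monic := by
  unfold Polynomial.Monic Polynomial.leadingCoeff
  rw [chi_natDegree, chi_coeff_d]


/-- Extended state: coordinates of `v` followed by the new last entry of `tau r v`. -/
noncomputable def ext (v : Fin d → ℤ) : ℕ → ℂ :=
  fun j => if h : j < d then ((v ⟨j, h⟩ : ℤ) : ℂ) else ((-⌊dotp r v⌋ : ℤ) : ℂ)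

/-- Linear functional on states given by the low coefficients of a polynomial. -/
noncomputable def G (p : Polynomial ℂ) (v : Fin d → ℤ) : ℂ :=
  ∑ j : Fin d, p.coeff j * ((v j : ℤ) : ℂ)

/-- The same functional on the extended state. -/
noncomputable def F (p : Polynomial ℂ) (v : Fin d → ℤ) : ℂ :=
  ∑ j ∈ Finset.range (d + 1), p.coeff j * ext r v j

theorem G_range (p : Polynomial ℂ) (v : Fin d → ℤ) :
    G p v = ∑ j ∈ Finset.range d, p.coeff j * ext r v j := by
  rw [G, Finset.sum_range]
  apply Finset.sum_congr rfl
  intro j _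
  rw [ext, dif_pos j.2]

theorem F_eq_G {p : Polynomial ℂ} (hp : p.natDegree < d) (v : Fin d → ℤ) :
    F r p v = G p v := by
  rw [F, Finset.sum_range_succ, coeff_eq_zero_of_natDegree_lt hp, zero_mul, add_zero,
    G_range]

theorem G_neg (p : Polynomial ℂ) (v : Fin d → ℤ) : G p (-v) = -G p v := by
  rw [G, G, ← Finset.sum_neg_distrib]
  apply Finset.sum_congr rfl
  intro j _
  push_cast [Pi.neg_apply]
  ring

theorem G_chi (v : Fin d → ℤ) : G (chi r) v = ((dotp r v : ℝ) : ℂ) := by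
  rw [G, dotp]
  push_cast
  apply Finset.sum_congr rfl
  intro j _
  rw [chi_coeff_lt r j.2]

theorem F_chi (v : Fin d → ℤ) :
    F r (chi r) v = ((dotp r v : ℝ) : ℂ) - ((⌊dotp r v⌋ : ℤ) : ℂ) := by
  rw [F, Finset.sum_range_succ, chi_coeff_d, ext, dif_neg (lt_irrefl d), one_mul,
    ← G_range, G_chi]
  push_cast
  try ring

theorem abs_F_chi (v : Fin d → ℤ) : Complex.abs (F r (chi r) v) ≤ 1 := by
  rw [F_chi]
  have : ((dotp r v : ℝ) : ℂ) - ((⌊dotp r v⌋ : ℤ) : ℂ) = ((Int.fract (dotp r v) : ℝ) : ℂ) := by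
    rw [Int.fract]; push_cast; ring
  rw [this, Complex.abs_ofReal, abs_of_nonneg (Int.fract_nonneg _)]
  exact (Int.fract_lt_one _).le

theorem G_tau {p : Polynomial ℂ} (hp : p.natDegree + 1 ≤ d) (v : Fin d → ℤ) :
    G p (tau r v) = F r (p * X) v := by
  have key : ∀ j : Fin d, ((tau r v j : ℤ) : ℂ) = ext r v ((j : ℕ) + 1) := by
    intro j
    rw [tau, ext]
    by_cases h : (j : ℕ) + 1 < d
    · rw [dif_pos h, dif_pos h]
    · rw [dif_neg h, dif_neg h]
  rw [G]
  simp_rw [key]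
  rw [F, Finset.sum_range_succ', coeff_mul_X_zero, zero_mul, add_zero, Finset.sum_range]
  apply Finset.sum_congr rfl
  intro j _
  rw [coeff_mul_X]

theorem master {p : Polynomial ℂ} (hp : p.natDegree + 1 ≤ d) (z : ℂ) (v : Fin d → ℤ) :
    G p (tau r v) = z * G p v + F r (p * (X - C z)) v := by
  have h1 : p * (X - C z) = p * X - C z * p := by ring
  have h2 : F r (p * X - C z * p) v = F r (p * X) v - z * F r p v := by
    rw [F, F, F, Finset.mul_sum, ← Finset.sum_sub_distrib]
    apply Finset.sum_congr rfl
    intro j _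
    rw [coeff_sub, coeff_C_mul]
    ring
  rw [h1, h2, G_tau r hp, F_eq_G r (lt_of_lt_of_le (Nat.lt_succ_self _) hp)]
  ring

theorem masterStar {p : Polynomial ℂ} (hp : p.natDegree + 1 ≤ d) (z : ℂ) (v : Fin d → ℤ) :
    G p (tauStar r v) = z * G p v - F r (p * (X - C z)) (-v) := by
  rw [tauStar, G_neg, master r hp z (-v), G_neg]
  ring


theorem orbit_rep {α : Type*} (f : α → α) (a : α) {m n : ℕ} (hmn : m < n)
    (h : f^[m] a = f^[n] a) : ∀ k, ∃ k' < n, f^[k] a = f^[k'] a := by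
  intro k
  induction k using Nat.strong_induction_on with
  | _ k ih =>
    by_cases hk : k < n
    · exact ⟨k, hk, rfl⟩
    · push_neg at hk
      have h1 : f^[k] a = f^[k - n + m] a := by
        have hk3 : f^[k-n] (f^[n] a) = f^[k] a := by
          rw [← Function.iterate_add_apply]
          congr 1
          omega
        rw [← hk3, ← h]
        exact (Function.iterate_add_apply f (k-n) m a).symm
      obtain ⟨k', hk', he⟩ := ih (k - n + m) (by omega)
      exact ⟨k', hk', h1.trans he⟩

theorem growth {z : ℂ} (hz : 1 < Complex.abs z) (φ : ℕ → ℂ)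
    (hstep : ∀ n, Complex.abs (φ (n+1) - z * φ n) ≤ 1) :
    ∀ n, (Complex.abs z)^n * (Complex.abs (φ 0) - 1/(Complex.abs z - 1)) + 1/(Complex.abs z - 1)
      ≤ Complex.abs (φ n) := by
  set s : ℝ := 1/(Complex.abs z - 1) with hs
  have hne : Complex.abs z - 1 ≠ 0 := sub_ne_zero.mpr (ne_of_gt hz)
  have h1 : (Complex.abs z - 1) * s = 1 := by
    rw [hs]
    field_simp
  have hzs : Complex.abs z * s - 1 = s := by nlinarith [h1]
  intro n
  induction n with
  | zero => simp
  | succ n ih =>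
    have hA : (0:ℝ) < Complex.abs z := by linarith
    have h2 : Complex.abs (z * φ n) - Complex.abs (φ (n+1))
        ≤ Complex.abs (φ (n+1) - z * φ n) := by
      rw [Complex.abs.map_sub]
      simpa [Complex.norm_eq_abs] using norm_sub_norm_le (z * φ n) (φ (n+1))
    rw [map_mul] at h2
    have h3 := hstep n
    rw [pow_succ]
    nlinarith [mul_le_mul_of_nonneg_left ih hA.le, pow_pos hA n]

theorem G_single (p : Polynomial ℂ) (j : Fin d) (N : ℤ) :
    G p (Pi.single j N) = p.coeff (j : ℕ) * (N : ℂ) := by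
  rw [G, Finset.sum_eq_single j]
  · rw [Pi.single_eq_same]
  · intro k _ hk
    rw [Pi.single_eq_of_ne hk, Int.cast_zero, mul_zero]
  · simp

theorem abs_root_le_one (hr : r ∈ Dset d) {z : ℂ}
    (hz : (chi r).IsRoot z) : Complex.abs z ≤ 1 := by
  by_contra hlt
  push_neg at hlt
  have hd : 0 < d := by
    by_contra hd0
    push_neg at hd0
    have h0 : d = 0 := by omega
    subst h0
    have h1 : chi r = 1 := by
      unfold chi
      simp
    rw [h1] at hz
    simp [Polynomial.IsRoot] at hz
  set q := chi r /ₘ (X - C z) with hq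
  have hfac : (X - C z) * q = chi r := (mul_divByMonic_eq_iff_isRoot).mpr hz
  have hqdeg : q.natDegree = d - 1 := by
    rw [hq, natDegree_divByMonic _ (monic_X_sub_C z), chi_natDegree, natDegree_X_sub_C]
  have hqd : q.natDegree + 1 ≤ d := by omega
  have hqmonic : q.Monic := by
    have := chi_monic r
    rw [← hfac] at this
    exact (monic_X_sub_C z).of_mul_monic_left this
  have hlead : q.coeff (d - 1) = 1 := by
    rw [← hqdeg]
    exact hqmonic
  set s : ℝ := 1/(Complex.abs z - 1) with hs
  obtain ⟨N, hN⟩ := exists_nat_gt s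
  set a : Fin d → ℤ := Pi.single ⟨d-1, by omega⟩ (N : ℤ) with ha
  set φ : ℕ → ℂ := fun n => G q ((tau r)^[n] a) with hφ
  have hφ0 : Complex.abs (φ 0) = N := by
    rw [hφ]
    simp only [Function.iterate_zero, id_eq]
    rw [ha, G_single, hlead, one_mul]
    push_cast
    rw [Complex.abs_natCast]
  have hstep : ∀ n, Complex.abs (φ (n+1) - z * φ n) ≤ 1 := by
    intro n
    have : φ (n+1) = z * φ n + F r (q * (X - C z)) ((tau r)^[n] a) := by
      rw [hφ]
      simp only [Function.iterate_succ_apply']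
      exact master r hqd z _
    rw [this]
    have h2 : q * (X - C z) = chi r := by rw [mul_comm]; exact hfac
    rw [h2]
    simpa using abs_F_chi r _
  have key : ∀ m n : ℕ, m < n → (tau r)^[m] a = (tau r)^[n] a → False := by
    intro m n hlt2 heq
    have hrep := orbit_rep (tau r) a hlt2 heq
    have hn0 : 0 < n := by omega
    have hnon : (Finset.range n).Nonempty := Finset.nonempty_range_iff.mpr (by omega)
    set B : ℝ := (Finset.range n).sup' hnon (fun k => Complex.abs (φ k)) with hB
    have hbd : ∀ k, Complex.abs (φ k) ≤ B := by
      intro k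
      obtain ⟨k', hk', he⟩ := hrep k
      have hφkk : φ k = φ k' := by simp only [hφ]; rw [he]
      rw [hφkk]
      exact Finset.le_sup' (fun k => Complex.abs (φ k)) (Finset.mem_range.mpr hk')
    have hc : (0:ℝ) < Complex.abs (φ 0) - s := by rw [hφ0]; linarith
    obtain ⟨k, hk⟩ := pow_unbounded_of_one_lt ((B - s)/(Complex.abs (φ 0) - s)) hlt
    have hgr := growth hlt φ hstep k
    rw [← hs] at hgr
    have hBs : B - s < (Complex.abs z)^k * (Complex.abs (φ 0) - s) := by
      rw [div_lt_iff₀ hc] at hk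
      linarith
    linarith [hbd k]
  obtain ⟨m, n, hmn, heq⟩ := hr a
  rcases Nat.lt_or_ge m n with h | h
  · exact key m n h heq
  · exact key n m (by omega) heq.symm


theorem chi_eval (z : ℂ) : (chi r).eval z = z ^ d + ∑ j : Fin d, ((r j : ℂ)) * z ^ (j : ℕ) := by
  unfold chi
  simp [eval_finset_sum]

theorem abs_root_lt_one (hr : r ∈ interior (Dset d)) {z : ℂ}
    (hz : (chi r).IsRoot z) : Complex.abs z < 1 := by
  obtain ⟨ε, hε, hball⟩ := Metric.mem_nhds_iff.mp (mem_interior_iff_mem_nhds.mp hr)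
  by_contra hge
  push_neg at hge
  have hcont : ContinuousAt (fun c : ℝ => fun j : Fin d => r j * c ^ (d - (j:ℕ))) 1 := by
    apply continuousAt_pi.mpr
    intro j
    fun_prop
  have h1 : (fun j : Fin d => r j * (1:ℝ) ^ (d - (j:ℕ))) = r := by
    funext j
    simp
  have hmem : Metric.ball r ε ∈ nhds (fun j : Fin d => r j * (1:ℝ) ^ (d - (j:ℕ))) := by
    rw [h1]
    exact Metric.ball_mem_nhds r hε
  have hnb : {c : ℝ | (fun j : Fin d => r j * c ^ (d - (j:ℕ))) ∈ Metric.ball r ε} ∈ nhds (1:ℝ) :=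
    hcont hmem
  have hev : ∀ᶠ c in nhdsWithin (1:ℝ) (Set.Ioi 1),
      ((fun j : Fin d => r j * c ^ (d - (j:ℕ))) ∈ Metric.ball r ε) := nhdsWithin_le_nhds hnb
  have hev2 : ∀ᶠ c in nhdsWithin (1:ℝ) (Set.Ioi 1), c ∈ Set.Ioi (1:ℝ) := self_mem_nhdsWithin
  obtain ⟨c, hcball, hc1⟩ := (hev.and hev2).exists
  rw [Set.mem_Ioi] at hc1
  set sp : Fin d → ℝ := fun j => r j * c ^ (d - (j:ℕ)) with hsdef
  have hsD : sp ∈ Dset d := hball hcball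
  have hc0 : (0:ℝ) < c := lt_trans one_pos hc1
  have hroot : (chi sp).IsRoot ((c:ℂ) * z) := by
    show (chi sp).eval ((c:ℂ) * z) = 0
    rw [chi_eval]
    have hre : ∀ j : Fin d, ((sp j : ℝ):ℂ) * (((c:ℝ):ℂ)*z)^(j:ℕ)
        = ((c:ℝ):ℂ)^d * (((r j : ℝ):ℂ) * z^(j:ℕ)) := by
      intro j
      have hcc : ((c:ℝ):ℂ)^(d - (j:ℕ)) * ((c:ℝ):ℂ)^(j:ℕ) = ((c:ℝ):ℂ)^d := by
        rw [← pow_add]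
        congr 1
        omega
      rw [hsdef]
      push_cast
      rw [mul_pow]
      linear_combination ((r j : ℝ):ℂ) * z^(j:ℕ) * hcc
    have hmain : (((c:ℝ):ℂ)*z) ^ d + ∑ j : Fin d, ((sp j : ℝ):ℂ) * (((c:ℝ):ℂ)*z)^(j:ℕ)
        = ((c:ℝ):ℂ)^d * ((chi r).eval z) := by
      rw [chi_eval, mul_pow, mul_add, Finset.mul_sum]
      congr 1
      apply Finset.sum_congr rfl
      intro j _
      exact hre j
    rw [hmain, show (chi r).eval z = 0 from hz, mul_zero]
  have hle := abs_root_le_one sp hsD hroot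
  rw [map_mul, Complex.abs_ofReal, abs_of_pos hc0] at hle
  nlinarith


set_option maxHeartbeats 1000000 in
theorem exists_root_list (hd : 0 < d) :
    ∃ w : ℕ → ℂ, (∀ j, j < d → (chi r).IsRoot (w j)) ∧
      ∏ j ∈ Finset.range d, (X - C (w j)) = chi r := by
  have hchine : chi r ≠ 0 := (chi_monic r).ne_zero
  set l : List ℂ := (chi r).roots.toList with hldef
  have hcard : Multiset.card (chi r).roots = d := by
    rw [(splits_iff_card_roots).mp (IsAlgClosed.splits (chi r)), chi_natDegree]
  have hlen : l.length = d := by rw [hldef, Multiset.length_toList, hcard]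
  set w : ℕ → ℂ := fun j => if h : j < l.length then l.get ⟨j, h⟩ else 0 with hwdef
  refine ⟨w, ?_, ?_⟩
  · intro j hj
    have h1 : j < l.length := by omega
    have h2 : w j = l.get ⟨j, h1⟩ := by
      rw [hwdef]
      exact dif_pos _
    rw [h2]
    have hmem : l.get ⟨j, h1⟩ ∈ (chi r).roots := by
      rw [hldef] at *
      exact (Multiset.mem_toList).mp (List.get_mem _ _)
    exact (Polynomial.mem_roots'.mp hmem).2
  · have hstep1 : ∏ j ∈ Finset.range d, (X - C (w j)) = ∏ j : Fin l.length, (X - C (w j.1)) := by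
      rw [← hlen, ← Finset.prod_range (fun j => (X - C (w j)))]
    have hstep2 : ∀ j : Fin l.length, X - C (w j.1) = X - C l[(j:ℕ)] := by
      intro j
      rw [hwdef]
      simp only [dif_pos j.2]
      rfl
    have hstep3 : (Multiset.map (fun a => X - C a) (chi r).roots).prod = chi r :=
      prod_multiset_X_sub_C_of_monic_of_roots_card_eq (chi_monic r)
        (by rw [hcard, chi_natDegree])
    calc ∏ j ∈ Finset.range d, (X - C (w j))
        = ∏ j : Fin l.length, (X - C l[(j:ℕ)]) := by rw [hstep1]; exact Fintype.prod_congr _ _ hstep2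
      _ = (l.map (fun a => X - C a)).prod := Fin.prod_univ_fun_getElem l (fun a => X - C a)
      _ = chi r := by
          rw [← hstep3, hldef]
          rw [← Multiset.coe_toList (chi r).roots, Multiset.map_coe, Multiset.prod_coe]
          simp

set_option maxHeartbeats 2000000 in
theorem finite_of_roots_small (hd : 0 < d)
    (hroots : ∀ z : ℂ, (chi r).IsRoot z → Complex.abs z < 1) : (Vr r).Finite := by
  haveI : Nonempty (Fin d) := ⟨⟨0, hd⟩⟩
  obtain ⟨w, hwroot, hwchi⟩ := exists_root_list r hd
  set P : ℕ → Polynomial ℂ := fun i => ∏ j ∈ Finset.range i, (X - C (w j)) with hPdef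
  have hPsucc : ∀ i, P (i+1) = P i * (X - C (w i)) := fun i => Finset.prod_range_succ _ i
  have hPmonic : ∀ i, (P i).Monic :=
    fun i => monic_prod_of_monic _ _ (fun j _ => monic_X_sub_C (w j))
  have hPdeg : ∀ i, (P i).natDegree = i := by
    intro i
    rw [hPdef, natDegree_prod_of_monic _ _ (fun j _ => monic_X_sub_C (w j))]
    simp [natDegree_X_sub_C]
  have hPd : P d = chi r := hwchi
  have hwlt : ∀ j, j < d → Complex.abs (w j) < 1 := fun j hj => hroots _ (hwroot j hj)
  set ρ : ℝ := Finset.univ.sup' Finset.univ_nonempty (fun j : Fin d => Complex.abs (w j.1)) with hρdef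
  have hρlt : ρ < 1 := by
    rw [hρdef]
    rw [Finset.sup'_lt_iff]
    intro j _
    exact hwlt j.1 j.2
  have hρ0 : 0 ≤ ρ := le_trans (Complex.abs.nonneg _)
    (Finset.le_sup' (fun j : Fin d => Complex.abs (w j.1)) (Finset.mem_univ ⟨0, hd⟩))
  have hwρ : ∀ j, j < d → Complex.abs (w j) ≤ ρ := by
    intro j hj
    exact Finset.le_sup' (fun j : Fin d => Complex.abs (w j.1)) (Finset.mem_univ ⟨j, hj⟩)
  have h1ρ : 0 < 1 - ρ := by linarith
  -- constants
  set Cst : ℝ := 1 + ∑ i ∈ Finset.range d, ∑ j : Fin d, Complex.abs ((P i).coeff j) with hCdef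
  have hCst1 : 1 ≤ Cst := by
    rw [hCdef]
    have : (0:ℝ) ≤ ∑ i ∈ Finset.range d, ∑ j : Fin d, Complex.abs ((P i).coeff j) :=
      Finset.sum_nonneg (fun i _ => Finset.sum_nonneg (fun j _ => Complex.abs.nonneg _))
    linarith
  have hCcoeff : ∀ i, i < d → ∀ j : Fin d, Complex.abs ((P i).coeff j) ≤ Cst := by
    intro i hi j
    rw [hCdef]
    have h1 : Complex.abs ((P i).coeff j) ≤ ∑ j : Fin d, Complex.abs ((P i).coeff j) :=
      Finset.single_le_sum (f := fun j : Fin d => Complex.abs ((P i).coeff j))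
        (fun k _ => Complex.abs.nonneg _) (Finset.mem_univ j)
    have h2 : ∑ j : Fin d, Complex.abs ((P i).coeff j)
        ≤ ∑ i ∈ Finset.range d, ∑ j : Fin d, Complex.abs ((P i).coeff j) :=
      Finset.single_le_sum (f := fun i => ∑ j : Fin d, Complex.abs ((P i).coeff j))
        (fun k _ => Finset.sum_nonneg (fun j _ => Complex.abs.nonneg _))
        (Finset.mem_range.mpr hi)
    linarith
  set Mi : ℕ → ℝ := fun i => Cst / (1 - ρ)^(d - i) with hMdef
  have hMpos : ∀ i, 0 < Mi i := by
    intro i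
    rw [hMdef]
    positivity
  have hMd : Mi d = Cst := by rw [hMdef]; simp
  have hMC : ∀ i, i ≤ d → Cst ≤ Mi i := by
    intro i hi
    rw [hMdef]
    rw [le_div_iff₀ (pow_pos h1ρ _)]
    nlinarith [pow_le_one₀ (le_of_lt h1ρ) (by linarith : 1 - ρ ≤ 1) (n := d - i), hCst1]
  have hMrec : ∀ i, i < d → ρ * Mi i + Mi (i+1) = Mi i := by
    intro i hi
    rw [hMdef]
    have hpow : (1-ρ)^(d-i) = (1-ρ)^(d-(i+1)) * (1-ρ) := by
      rw [← pow_succ]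
      congr 1
      omega
    field_simp
    rw [hpow]
    ring
  -- the invariant
  set Inv : (Fin d → ℤ) → Prop := fun v => ∀ i, i < d → Complex.abs (G (P i) v) ≤ Mi i
    with hInvdef
  have hInvNeg : ∀ v, Inv v → Inv (-v) := by
    intro v hv i hi
    rw [G_neg, map_neg_eq_map]
    exact hv i hi
  have hFb : ∀ v, Inv v → ∀ i, i < d → Complex.abs (F r (P (i+1)) v) ≤ Mi (i+1) := by
    intro v hv i hi
    rcases Nat.lt_or_ge (i+1) d with h | h
    · rw [F_eq_G r (by rw [hPdeg]; exact h)]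
      exact hv (i+1) h
    · have hid : i + 1 = d := by omega
      rw [hid, hPd, hMd]
      exact le_trans (abs_F_chi r v) hCst1
  have hstepτ : ∀ v, Inv v → Inv (tau r v) := by
    intro v hv i hi
    have hm := master r (p := P i) (by rw [hPdeg]; omega) (w i) v
    rw [← hPsucc i] at hm
    rw [hm]
    calc Complex.abs (w i * G (P i) v + F r (P (i+1)) v)
        ≤ Complex.abs (w i) * Complex.abs (G (P i) v) + Complex.abs (F r (P (i+1)) v) := by
          rw [← map_mul]
          exact Complex.abs.add_le _ _
      _ ≤ ρ * Mi i + Mi (i+1) := by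
          have h1 := hwρ i hi
          have h2 := hv i hi
          have h3 := hFb v hv i hi
          have h4 := Complex.abs.nonneg (G (P i) v)
          nlinarith [Complex.abs.nonneg (w i), hMpos i]
      _ = Mi i := hMrec i hi
  have hstepτs : ∀ v, Inv v → Inv (tauStar r v) := by
    intro v hv i hi
    have hm := masterStar r (p := P i) (by rw [hPdeg]; omega) (w i) v
    rw [← hPsucc i] at hm
    rw [hm]
    calc Complex.abs (w i * G (P i) v - F r (P (i+1)) (-v))
        ≤ Complex.abs (w i) * Complex.abs (G (P i) v) + Complex.abs (F r (P (i+1)) (-v)) := by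
          rw [← map_mul]
          exact Complex.abs.sub_le_add _ _
      _ ≤ ρ * Mi i + Mi (i+1) := by
          have h1 := hwρ i hi
          have h2 := hv i hi
          have h3 := hFb (-v) (hInvNeg v hv) i hi
          have h4 := Complex.abs.nonneg (G (P i) v)
          nlinarith [Complex.abs.nonneg (w i), hMpos i]
      _ = Mi i := hMrec i hi
  have hseed : ∀ j : Fin d, Inv (Pi.single j 1) := by
    intro j i hi
    have : (Pi.single j 1 : Fin d → ℤ) = Pi.single j (1:ℤ) := rfl
    rw [this, G_single, Int.cast_one, mul_one]
    exact le_trans (hCcoeff i hi j) (hMC i (le_of_lt hi))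
  have hVseq : ∀ n, ∀ v ∈ Vseq r n, Inv v := by
    intro n
    induction n with
    | zero =>
      rintro v ⟨j, hj | hj⟩
      · rw [hj]
        exact hseed j
      · rw [hj]
        exact hInvNeg _ (hseed j)
    | succ n ih =>
      rintro v ((hv | ⟨u, hu, rfl⟩) | ⟨u, hu, rfl⟩)
      · exact ih v hv
      · exact hstepτ u (ih u hu)
      · exact hstepτs u (ih u hu)
  have hVr : ∀ v ∈ Vr r, Inv v := by
    intro v hv
    rw [Vr, Set.mem_iUnion] at hv
    obtain ⟨n, hn⟩ := hv
    exact hVseq n v hn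
  -- coordinate bounds
  have hcoord : ∀ i : ℕ, ∃ B : ℝ, 0 ≤ B ∧
      ∀ j : Fin d, (j : ℕ) < i → ∀ v, Inv v → (|v j| : ℝ) ≤ B := by
    intro i
    induction i with
    | zero => exact ⟨0, le_refl 0, fun j hj => absurd hj (Nat.not_lt_zero _)⟩
    | succ i ih =>
      obtain ⟨B, hB0, hB⟩ := ih
      by_cases hi : i < d
      · set Bi : ℝ := Mi i + (∑ k : Fin d, Complex.abs ((P i).coeff k)) * B with hBidef
        refine ⟨max B Bi, le_trans hB0 (le_max_left _ _), ?_⟩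
        intro j hj v hv
        rcases Nat.lt_or_ge (j:ℕ) i with h | h
        · exact le_trans (hB j h v hv) (le_max_left _ _)
        · have hji : (j:ℕ) = i := by omega
          have hcoeffj : (P i).coeff (j:ℕ) = 1 := by
            rw [hji]
            have hcn := (hPmonic i).coeff_natDegree
            rwa [hPdeg i] at hcn
          have hsplit : ((v j : ℤ) : ℂ)
              = G (P i) v - ∑ k ∈ Finset.univ.erase j, (P i).coeff k * ((v k : ℤ):ℂ) := by
            rw [G, ← Finset.add_sum_erase _ _ (Finset.mem_univ j), hcoeffj, one_mul]
            ring
          have habs : (|v j| : ℝ) = Complex.abs ((v j : ℤ) : ℂ) := by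
            rw [Complex.abs_intCast]
          rw [habs, hsplit]
          have hterm : ∀ k ∈ Finset.univ.erase j,
              Complex.abs ((P i).coeff k * ((v k : ℤ):ℂ)) ≤ Complex.abs ((P i).coeff k) * B := by
            intro k hk
            rw [map_mul]
            rcases Nat.lt_or_ge (k:ℕ) i with hki | hki
            · have := hB k hki v hv
              rw [← Complex.abs_intCast (v k)] at this
              exact mul_le_mul_of_nonneg_left this (Complex.abs.nonneg _)
            · have hkne : (k:ℕ) ≠ (j:ℕ) := fun hc =>
                (Finset.mem_erase.mp hk).1 (Fin.ext hc)
              have hkgt : i < (k:ℕ) := by omega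
              have : (P i).coeff (k:ℕ) = 0 := by
                apply coeff_eq_zero_of_natDegree_lt
                rw [hPdeg]
                exact hkgt
              rw [this]
              simp
          calc Complex.abs (G (P i) v - ∑ k ∈ Finset.univ.erase j, (P i).coeff k * ((v k : ℤ):ℂ))
              ≤ Complex.abs (G (P i) v)
                + Complex.abs (∑ k ∈ Finset.univ.erase j, (P i).coeff k * ((v k : ℤ):ℂ)) :=
                Complex.abs.sub_le_add _ _
            _ ≤ Mi i + ∑ k ∈ Finset.univ.erase j, Complex.abs ((P i).coeff k) * B := by
                have h1 := hv i hi
                have h2 := le_trans (Complex.abs.sum_le _ _) (Finset.sum_le_sum hterm)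
                linarith
            _ ≤ Mi i + (∑ k : Fin d, Complex.abs ((P i).coeff k)) * B := by
                rw [Finset.sum_mul]
                have : ∑ k ∈ Finset.univ.erase j, Complex.abs ((P i).coeff k) * B
                    ≤ ∑ k : Fin d, Complex.abs ((P i).coeff k) * B :=
                  Finset.sum_le_sum_of_subset_of_nonneg (Finset.erase_subset _ _)
                    (fun k _ _ => mul_nonneg (Complex.abs.nonneg _) hB0)
                linarith
            _ = Bi := by rw [hBidef]
            _ ≤ max B Bi := le_max_right _ _
      · refine ⟨B, hB0, ?_⟩
        intro j hj v hv
        exact hB j (by omega) v hv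
  obtain ⟨B, hB0, hB⟩ := hcoord d
  apply Set.Finite.subset (Set.Finite.pi (fun j : Fin d => Set.finite_Icc (-⌈B⌉) ⌈B⌉))
  intro v hv
  rw [Set.mem_pi]
  intro j _
  have h1 : (|v j| : ℝ) ≤ B := hB j j.2 v (hVr v hv)
  have h2 : |v j| ≤ ⌈B⌉ := by
    have := le_trans h1 (Int.le_ceil B)
    exact_mod_cast this
  rw [Set.mem_Icc]
  constructor
  · linarith [neg_abs_le (v j)]
  · linarith [le_abs_self (v j)]

end SRS

theorem stmt18 {d : ℕ} (r : Fin d → ℝ) (hr : r ∈ interior (Dset d)) :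
    (Vr r).Finite := by
  rcases Nat.eq_zero_or_pos d with h0 | hd
  · subst h0
    exact Set.toFinite _
  · exact SRS.finite_of_roots_small r hd (fun z hz => SRS.abs_root_lt_one r hr hz)
end

section
/- Any bounded convex polyhedron P ⊆ ℝ^d that is an intersection of finitely many hyperplanes and finitely many open strips is the intersection of a nondegenerate open polyhedron (an open set of finite positive Lebesgue measure given as intersection of open half-spaces) and an affine subspace of ℝ^d, provided P is nonempty. -/
open scoped BigOperators
open Set

theorem stmt19 {d : ℕ} (m k : ℕ)
    (A : Fin m → Fin d → ℝ) (b : Fin m → ℝ)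
    (U : Fin k → Fin d → ℝ) (α β : Fin k → ℝ)
    (P : Set (Fin d → ℝ))
    (hP : P = (⋂ i : Fin m, {x : Fin d → ℝ | ∑ j, A i j * x j = b i}) ∩
        (⋂ i : Fin k, {x : Fin d → ℝ |
          α i < ∑ j, U i j * x j ∧ ∑ j, U i j * x j < β i}))
    (hconv : Convex ℝ P) (hbd : Bornology.IsBounded P) (hne : P.Nonempty) :
    ∃ (O : Set (Fin d → ℝ)) (S : AffineSubspace ℝ (Fin d → ℝ)),
      P = O ∩ (S : Set (Fin d → ℝ)) ∧ IsOpen O ∧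
      0 < MeasureTheory.volume O ∧ MeasureTheory.volume O < ⊤ ∧
      ∃ (l : ℕ) (w : Fin l → Fin d → ℝ) (c : Fin l → ℝ),
        O = ⋂ i : Fin l, {x : Fin d → ℝ | c i < ∑ j, w i j * x j} := by
  classical
  obtain ⟨x₀, hx₀⟩ := hne
  obtain ⟨R, hR⟩ := hbd.exists_norm_le
  set R' : ℝ := max R 0 + 1 with hR'def
  have hR'pos : (0:ℝ) < R' := by positivity
  have hPbox : ∀ x ∈ P, ∀ j, |x j| < R' := by
    intro x hx j
    calc |x j| = ‖x j‖ := rfl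
      _ ≤ ‖x‖ := norm_le_pi_norm x j
      _ ≤ R := hR x hx
      _ < R' := by
          have := le_max_left R 0
          rw [hR'def]; linarith
  -- the half-space data
  set W : (Fin k ⊕ (Fin k ⊕ (Fin d ⊕ Fin d))) → Fin d → ℝ :=
    Sum.elim U (Sum.elim (fun i j => -U i j)
      (Sum.elim (fun j j' => if j' = j then (1:ℝ) else 0)
                (fun j j' => if j' = j then (-1:ℝ) else 0))) with hW
  set C : (Fin k ⊕ (Fin k ⊕ (Fin d ⊕ Fin d))) → ℝ :=
    Sum.elim α (Sum.elim (fun i => -β i)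
      (Sum.elim (fun _ => -R') (fun _ => -R'))) with hC
  set g : (Fin k ⊕ (Fin k ⊕ (Fin d ⊕ Fin d))) → Set (Fin d → ℝ) := fun s => {x | C s < ∑ j, W s j * x j} with hg
  set O : Set (Fin d → ℝ) := ⋂ s, g s with hO
  -- sum computations
  have hsum1 : ∀ (j : Fin d) (x : Fin d → ℝ),
      ∑ j', (if j' = j then (1:ℝ) else 0) * x j' = x j := by
    intro j x; simp [ite_mul]
  have hsum2 : ∀ (j : Fin d) (x : Fin d → ℝ),
      ∑ j', (if j' = j then (-1:ℝ) else 0) * x j' = -x j := by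
    intro j x; simp [ite_mul]
  have hsum3 : ∀ (i : Fin k) (x : Fin d → ℝ),
      ∑ j, (-U i j) * x j = -∑ j, U i j * x j := by
    intro i x; simp [neg_mul]
  -- description of O
  have hO_eq : O = (⋂ i : Fin k, {x : Fin d → ℝ |
        α i < ∑ j, U i j * x j ∧ ∑ j, U i j * x j < β i})
      ∩ {x : Fin d → ℝ | ∀ j, |x j| < R'} := by
    ext x
    simp only [hO, hg, hW, hC, mem_iInter, Sum.forall, Sum.elim_inl, Sum.elim_inr,
      mem_inter_iff, mem_setOf_eq, abs_lt]
    constructor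
    · rintro ⟨h1, h2, h3, h4⟩
      refine ⟨fun i => ⟨h1 i, ?_⟩, fun j => ⟨?_, ?_⟩⟩
      · have := h2 i; rw [hsum3 i x] at this; linarith
      · have := h3 j; rw [hsum1 j x] at this; exact this
      · have := h4 j; rw [hsum2 j x] at this; linarith
    · rintro ⟨h1, h2⟩
      refine ⟨fun i => (h1 i).1, fun i => ?_, fun j => ?_, fun j => ?_⟩
      · rw [hsum3 i x]; have := (h1 i).2; linarith
      · rw [hsum1 j x]; exact (h2 j).1
      · rw [hsum2 j x]; have := (h2 j).2; linarith
  -- the affine subspace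
  set S : AffineSubspace ℝ (Fin d → ℝ) :=
    { carrier := ⋂ i : Fin m, {x : Fin d → ℝ | ∑ j, A i j * x j = b i}
      smul_vsub_vadd_mem' := by
        intro c p1 p2 p3 h1 h2 h3
        simp only [mem_iInter, mem_setOf_eq] at h1 h2 h3 ⊢
        intro i
        have hterm : ∀ j, A i j * ((c • (p1 -ᵥ p2) +ᵥ p3) j)
            = c * (A i j * p1 j) - c * (A i j * p2 j) + A i j * p3 j := by
          intro j
          simp only [vsub_eq_sub, vadd_eq_add, Pi.add_apply, Pi.smul_apply,
            Pi.sub_apply, smul_eq_mul]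
          ring
        rw [Finset.sum_congr rfl fun j _ => hterm j, Finset.sum_add_distrib,
          Finset.sum_sub_distrib, ← Finset.mul_sum, ← Finset.mul_sum,
          h1 i, h2 i, h3 i]
        ring } with hS
  have hScoe : (S : Set (Fin d → ℝ))
      = ⋂ i : Fin m, {x : Fin d → ℝ | ∑ j, A i j * x j = b i} := rfl
  have hx₀P : x₀ ∈ P := hx₀
  -- P = O ∩ S
  have hPO : P = O ∩ (S : Set (Fin d → ℝ)) := by
    rw [hO_eq, hScoe]
    ext x
    constructor
    · intro hx
      have hxbox : ∀ j, |x j| < R' := hPbox x hx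
      rw [hP] at hx
      exact ⟨⟨hx.2, hxbox⟩, hx.1⟩
    · rintro ⟨⟨hstrip, _⟩, hhyp⟩
      rw [hP]; exact ⟨hhyp, hstrip⟩
  -- O is open
  have hOopen : IsOpen O := by
    refine isOpen_iInter_of_finite fun s => ?_
    exact isOpen_lt continuous_const
      (continuous_finset_sum _ fun j _ => continuous_const.mul (continuous_apply j))
  -- x₀ ∈ O
  have hx₀O : x₀ ∈ O := by
    rw [hO_eq]
    have hx := hx₀P
    rw [hP] at hx
    exact ⟨hx.2, hPbox x₀ hx₀P⟩
  have hpos : 0 < MeasureTheory.volume O := hOopen.measure_pos _ ⟨x₀, hx₀O⟩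
  -- O is bounded, hence finite volume
  have hOsub : O ⊆ Metric.ball (0 : Fin d → ℝ) R' := by
    intro x hx
    rw [hO_eq] at hx
    have hxb := hx.2
    rw [Metric.mem_ball, dist_zero_right, pi_norm_lt_iff hR'pos]
    exact fun j => hxb j
  have hfin : MeasureTheory.volume O < ⊤ :=
    lt_of_le_of_lt (MeasureTheory.measure_mono hOsub) MeasureTheory.measure_ball_lt_top
  -- reindex with Fin l
  set E : (Fin k ⊕ (Fin k ⊕ (Fin d ⊕ Fin d))) ≃ Fin (k + (k + (d + d))) :=
    (Equiv.sumCongr (Equiv.refl (Fin k))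
      ((Equiv.sumCongr (Equiv.refl (Fin k)) finSumFinEquiv).trans finSumFinEquiv)).trans
      finSumFinEquiv with hE
  refine ⟨O, S, hPO, hOopen, hpos, hfin,
    k + (k + (d + d)), fun i => W (E.symm i), fun i => C (E.symm i), ?_⟩
  calc O = ⋂ s, g s := rfl
    _ = ⋂ i, g (E.symm i) := (E.symm.surjective.iInter_comp g).symm
end
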